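/- Suppose all points x_k lie in a set C with ‖x − y‖² ≤ D for all x, y ∈ C, x* ∈ C, f(x_k) ≥ f* for all k, and with γ_k = 1/√k one has Γ·(1/√(k+1))·(f(x_k) − f*) ≤ ‖x_k − x*‖² − ‖x_{k+1} − x*‖² + (βc/ρ)(1/k) for all k ≥ 1 (Γ > 0, β ∈ (0,1), c > 0, ρ > 1/2). Then for every N ≥ 2: min{f(x_k) − f* : k = 1,…,N} ≤ 4(D + (βc/ρ)ln 3)/(Γ√(N+2)). -/

import Mathlib

/-!
Sum the recursion over the window `k ∈ [⌊N/2⌋ + 1, N]`. The distances telescope to at most `D`,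
and the step-size terms contribute `∑ 1/k ≤ log (N / ⌊N/2⌋) ≤ log 3`. The weights `1/√(k+1)` on
the window are each at least `1/√(N+2)` and there are at least `(N+2)/4` of them, so they sum to at
least `√(N+2)/4`; the minimum of `f(x_k) - f*` is at most the weighted average.
-/

open Finset Real

theorem Finset.sum_Icc_sub_succ {G : Type*} [AddCommGroup G] (d : ℕ → G) {m n : ℕ} (h : m ≤ n) :
    ∑ k ∈ Icc m n, (d k - d (k + 1)) = d m - d (n + 1) := by
  rw [← neg_sub, ← sum_Icc_sub h d, ← sum_neg_distrib]
  simp only [neg_sub]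

theorem Finset.inf'_mul_sum_le_sum_mul {ι α : Type*} [CommSemiring α] [LinearOrder α]
    [IsOrderedRing α] {s t : Finset ι} (hs : s.Nonempty) (hts : t ⊆ s) (g w : ι → α)
    (hw : ∀ k ∈ t, 0 ≤ w k) :
    s.inf' hs g * ∑ k ∈ t, w k ≤ ∑ k ∈ t, w k * g k := by
  rw [mul_sum]
  refine sum_le_sum fun k hk => ?_
  rw [mul_comm]
  exact mul_le_mul_of_nonneg_left (inf'_le g (hts hk)) (hw k hk)

theorem le_div_of_mul_le_of_le {α : Type*} [Field α] [LinearOrder α] [IsStrictOrderedRing α]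
    {m S B W : α} (hB : 0 ≤ B) (hW : 0 < W) (hWS : W ≤ S) (h : m * S ≤ B) : m ≤ B / W := by
  rcases le_or_gt m 0 with hm | hm
  · exact hm.trans (div_nonneg hB hW.le)
  · rw [le_div_iff₀ hW]
    exact (mul_le_mul_of_nonneg_left hWS hm.le).trans h

theorem Real.inv_add_one_le_log_add_one_sub_log {x : ℝ} (hx : 0 < x) :
    (x + 1)⁻¹ ≤ log (x + 1) - log x := by
  have h := one_sub_inv_le_log_of_pos (show 0 < (x + 1) / x by positivity)
  rw [log_div (by positivity) hx.ne', inv_div] at h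
  calc (x + 1)⁻¹ = 1 - x / (x + 1) := by field_simp; ring
    _ ≤ _ := h

theorem Real.sum_Icc_succ_inv_le_log_div {m n : ℕ} (hm : 0 < m) (hmn : m ≤ n) :
    ∑ k ∈ Icc (m + 1) n, (k : ℝ)⁻¹ ≤ log (n / m) := by
  induction n, hmn using Nat.le_induction with
  | base => simp
  | succ n hmn ih =>
    have hn : (0 : ℝ) < n := by exact_mod_cast hm.trans_le hmn
    have hm' : (0 : ℝ) < m := by exact_mod_cast hm
    rw [sum_Icc_succ_top (by omega), log_div (by positivity) hm'.ne']
    rw [log_div hn.ne' hm'.ne'] at ih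
    have := inv_add_one_le_log_add_one_sub_log hn
    push_cast
    linarith

theorem Real.sum_Icc_half_inv_le_log_three {N : ℕ} (hN : 2 ≤ N) :
    ∑ k ∈ Icc (N / 2 + 1) N, (k : ℝ)⁻¹ ≤ log 3 := by
  have hhalf : (0 : ℝ) < (N / 2 : ℕ) := by exact_mod_cast (show 0 < N / 2 by omega)
  refine (sum_Icc_succ_inv_le_log_div (by omega) (by omega)).trans
    (log_le_log (div_pos (by positivity) hhalf) ?_)
  rw [div_le_iff₀ hhalf]
  exact_mod_cast (show N ≤ 3 * (N / 2) by omega)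

theorem Real.sqrt_add_two_div_four_le_sum_Icc_half_inv_sqrt {N : ℕ} (hN : 0 < N) :
    √((N : ℝ) + 2) / 4 ≤ ∑ k ∈ Icc (N / 2 + 1) N, (√((k : ℝ) + 1))⁻¹ := by
  have hterm : ∀ k ∈ Icc (N / 2 + 1) N, (√((N : ℝ) + 2))⁻¹ ≤ (√((k : ℝ) + 1))⁻¹ := by
    intro k hk
    have hkN : (k : ℝ) ≤ N := by exact_mod_cast (mem_Icc.mp hk).2
    gcongr
    linarith
  have hcard : ((N : ℝ) + 2) / 4 ≤ #(Icc (N / 2 + 1) N) := by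
    rw [Nat.card_Icc]
    rw [div_le_iff₀ (by norm_num)]
    exact_mod_cast (by omega : N + 2 ≤ (N + 1 - (N / 2 + 1)) * 4)
  calc √((N : ℝ) + 2) / 4 = ((N : ℝ) + 2) / 4 * (√((N : ℝ) + 2))⁻¹ := by
        rw [← div_eq_mul_inv, div_right_comm, div_sqrt]
    _ ≤ #(Icc (N / 2 + 1) N) * (√((N : ℝ) + 2))⁻¹ := by gcongr
    _ ≤ _ := by rw [← nsmul_eq_mul]; exact card_nsmul_le_sum _ _ _ hterm

theorem stmt_14 (n : ℕ) (f : EuclideanSpace ℝ (Fin n) → ℝ) (fstar : ℝ)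
    (C : Set (EuclideanSpace ℝ (Fin n))) (D : ℝ)
    (hD : ∀ x ∈ C, ∀ y ∈ C, ‖x - y‖ ^ 2 ≤ D)
    (x : ℕ → EuclideanSpace ℝ (Fin n)) (hxC : ∀ k, x k ∈ C)
    (xstar : EuclideanSpace ℝ (Fin n)) (hxstar : xstar ∈ C)
    (Γ β c ρ : ℝ) (hΓ : 0 < Γ) (hβ : β ∈ Set.Ioo (0 : ℝ) 1) (hc : 0 < c)
    (hρ : 1 / 2 < ρ)
    (hrec : ∀ k : ℕ, 1 ≤ k → Γ * (1 / Real.sqrt (k + 1)) * (f (x k) - fstar) ≤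
        ‖x k - xstar‖ ^ 2 - ‖x (k + 1) - xstar‖ ^ 2 + (β * c / ρ) * (1 / k)) :
    ∀ N : ℕ, ∀ hN : 2 ≤ N,
      (Finset.Icc 1 N).inf' (Finset.nonempty_Icc.mpr (by omega))
          (fun k => f (x k) - fstar) ≤
        4 * (D + (β * c / ρ) * Real.log 3) / (Γ * Real.sqrt (N + 2)) := by
  intro N hN
  set a := β * c / ρ
  have ha : 0 ≤ a := div_nonneg (mul_pos hβ.1 hc).le (by linarith)
  have hD0 : 0 ≤ D := (sq_nonneg _).trans (hD xstar hxstar xstar hxstar)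
  set s := Icc (N / 2 + 1) N
  have hs : s ⊆ Icc 1 N := Icc_subset_Icc_left (by omega)
  have hdescent : ∑ k ∈ s, Γ * (1 / √((k : ℝ) + 1)) * (f (x k) - fstar) ≤ D + a * log 3 :=
    calc _ ≤ ∑ k ∈ s, (‖x k - xstar‖ ^ 2 - ‖x (k + 1) - xstar‖ ^ 2 + a * (1 / k)) :=
          sum_le_sum fun k hk => hrec k (mem_Icc.mp (hs hk)).1
      _ = ‖x (N / 2 + 1) - xstar‖ ^ 2 - ‖x (N + 1) - xstar‖ ^ 2 + a * ∑ k ∈ s, (k : ℝ)⁻¹ := by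
          rw [sum_add_distrib, sum_Icc_sub_succ _ (by omega), mul_sum]
          simp only [one_div]
      _ ≤ D - 0 + a * log 3 := by
          gcongr
          · exact hD _ (hxC _) _ hxstar
          · positivity
          · exact sum_Icc_half_inv_le_log_three hN
      _ = D + a * log 3 := by rw [sub_zero]
  have hweights : Γ * √((N : ℝ) + 2) / 4 ≤ ∑ k ∈ s, Γ * (1 / √((k : ℝ) + 1)) := by
    rw [← mul_sum, mul_div_assoc]
    simp only [one_div]
    gcongr
    exact sqrt_add_two_div_four_le_sum_Icc_half_inv_sqrt (by omega)
  calc _ ≤ (D + a * log 3) / (Γ * √((N : ℝ) + 2) / 4) :=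
        le_div_of_mul_le_of_le (by positivity) (by positivity) hweights
          ((inf'_mul_sum_le_sum_mul _ hs _ _ fun k _ => by positivity).trans hdescent)
    _ = _ := by ring
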